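/- arXiv:1604.03787 — 2 statements merged into one kernel-verified Lean document; each statement's English description precedes it below -/
import Mathlib

section
/- For every integer n ≥ 0, every integer k, and every real x: E_{n,p,q}^{(k)}(x + 1) − E_{n,p,q}^{(k)}(x) = Σ_{i=0}^{n−1} binom(n,i) · E_{i,p,q}^{(k)}(x) (the right-hand side being the empty sum 0 when n = 0). -/
open Finset

/-- The `(p,q)`-integer `[m]_{p,q} = (p^m - q^m)/(p - q)`. -/
noncomputable def pqInt (p q : ℝ) (m : ℕ) : ℝ := (p ^ m - q ^ m) / (p - q)

/-- The exponential generating function `∑ f n * t^n / n!` of a sequence `f`. -/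
noncomputable def egf (f : ℕ → ℝ) : PowerSeries ℝ :=
  PowerSeries.mk fun n => f n / n.factorial

/-- Formal substitution of a power series `S` with zero constant term into the
`(p,q)`-polylogarithm `Li_{k,p,q}(s) = ∑_{m ≥ 1} s^m / [m]_{p,q}^k`.
(For `m > n` the series `S^m` has zero `n`-th coefficient, so the sum is finite.) -/
noncomputable def pqLi (p q : ℝ) (k : ℤ) (S : PowerSeries ℝ) : PowerSeries ℝ :=
  PowerSeries.mk fun n =>
    ∑ m ∈ Finset.Icc 1 n, PowerSeries.coeff (R := ℝ) n (S ^ m) / pqInt p q m ^ k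

/-!
Replacing `x` by `x + 1` multiplies the generating function by `e^t`, while the factor
`2 Li_{k,p,q}(1 - e^{-t}) / (1 + e^t)` does not involve `x`. Hence the exponential generating
function of `n ↦ E_n(x + 1)` is that of `n ↦ E_n(x)` times `e^t`, i.e. the binomial transform.
-/

open PowerSeries

theorem coeff_egf (f : ℕ → ℝ) (n : ℕ) : coeff n (egf f) = f n / n.factorial :=
  coeff_mk _ _

theorem egf_injective : Function.Injective egf := by
  intro f g hfg
  funext n
  have hn := congrArg (coeff n) hfg
  rwa [coeff_egf, coeff_egf, div_left_inj' (Nat.cast_ne_zero.mpr n.factorial_ne_zero)] at hn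

theorem egf_mul_exp (f : ℕ → ℝ) :
    egf f * exp ℝ = egf fun n => ∑ i ∈ range (n + 1), (n.choose i : ℝ) * f i := by
  ext n
  rw [coeff_mul, Nat.sum_antidiagonal_eq_sum_range_succ_mk, coeff_egf, sum_div]
  refine sum_congr rfl fun i hi => ?_
  have hin : i ≤ n := Nat.lt_succ_iff.mp (mem_range.mp hi)
  rw [coeff_egf, coeff_exp, Nat.cast_choose ℝ hin, map_div₀, map_one, map_natCast]
  field_simp

theorem rescale_add_one_exp {A : Type*} [CommRing A] [Algebra ℚ A] (a : A) :
    rescale (a + 1) (exp A) = rescale a (exp A) * exp A := by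
  rw [← exp_mul_exp_eq_exp_add a 1, rescale_one, RingHom.id_apply]

theorem one_add_exp_ne_zero {A : Type*} [Field A] [CharZero A] : (1 + exp A : A⟦X⟧) ≠ 0 := by
  intro h
  have h0 := congrArg constantCoeff h
  norm_num [constantCoeff_exp] at h0

theorem pqPolyEuler_succ_sub_general
    (p q : ℝ) (k : ℤ)
    (E : ℝ → ℕ → ℝ)
    (hE : ∀ x : ℝ,
      2 * pqLi p q k (1 - PowerSeries.rescale (-1) (PowerSeries.exp ℝ)) *
          PowerSeries.rescale x (PowerSeries.exp ℝ) =
        (1 + PowerSeries.exp ℝ) * egf (E x)) :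
    ∀ (n : ℕ) (x : ℝ),
      E (x + 1) n - E x n = ∑ i ∈ Finset.range n, (n.choose i : ℝ) * E x i := by
  intro n x
  have shift : egf (E (x + 1)) = egf (E x) * exp ℝ := by
    apply mul_left_cancel₀ one_add_exp_ne_zero
    rw [← hE, rescale_add_one_exp, ← mul_assoc, hE, mul_assoc]
  rw [egf_mul_exp] at shift
  have hn := congrFun (egf_injective shift) n
  rw [sum_range_succ, Nat.choose_self, Nat.cast_one, one_mul] at hn
  linarith

theorem pqPolyEuler_succ_sub
    (p q : ℝ) (hq : 0 < q) (hqp : q < p) (hp : p ≤ 1) (k : ℤ)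
    (E : ℝ → ℕ → ℝ)
    (hE : ∀ x : ℝ,
      2 * pqLi p q k (1 - PowerSeries.rescale (-1) (PowerSeries.exp ℝ)) *
          PowerSeries.rescale x (PowerSeries.exp ℝ) =
        (1 + PowerSeries.exp ℝ) * egf (E x)) :
    ∀ (n : ℕ) (x : ℝ),
      E (x + 1) n - E x n = ∑ i ∈ Finset.range n, (n.choose i : ℝ) * E x i :=
  pqPolyEuler_succ_sub_general p q k E hE
end

section
/- For every integer n ≥ 1, every integer k, and every real x: E_{n,p,q}^{(k)}(x) = Σ_{l=0}^{n−1} (1/[l+1]_{p,q}^k) · Σ_{j=0}^{l+1} binom(l+1,j) · (−1)^j · E_n(x − j), where E_n denotes the classical Euler polynomial; moreover the summand in l vanishes for every l ≥ n (the (l+1)-st finite difference of a polynomial of degree n is zero), so the sum may equivalently be taken over all l ≥ 0. -/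
/-!
The series `1 + e^t` cancels: the generating function of `E^{(k)}_{n,p,q}(x)` is
`Li_{k,p,q}(1 - e^{-t})` times that of the Euler polynomials `E_n(x)`. Since the generating
function of `E_n(x - j)` is `e^{-jt}` times that of `E_n(x)`, the binomial expansion of
`(1 - e^{-t})^m` shows that `(1 - e^{-t})^m ∑ E_n(x) t^n/n!` generates the backward differences
`∇^m E_n(x)`. As `1 - e^{-t}` has no constant term, `∇^m E_n(x) = 0` for `n < m`; this proves the
second claim and cuts the polylogarithm down to its terms `m ≤ n`, which gives the first.
-/

open Finset

open PowerSeries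

noncomputable def backwardDiff (m : ℕ) (f : ℝ → ℝ) (x : ℝ) : ℝ :=
  ∑ j ∈ range (m + 1), (m.choose j : ℝ) * (-1) ^ j * f (x - j)

section Coefficients

variable {R : Type*} [CommRing R]

theorem coeff_pow_mul_eq_zero_of_lt {S : R⟦X⟧} (hS : constantCoeff S = 0) (T : R⟦X⟧)
    {m n : ℕ} (h : n < m) : coeff n (S ^ m * T) = 0 :=
  X_pow_dvd_iff.mp ((pow_dvd_pow_of_dvd (X_dvd_iff.mpr hS) m).mul_right T) n h

variable [Algebra ℚ R]

theorem constantCoeff_one_sub_rescale_exp (a : R) :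
    constantCoeff (1 - rescale a (exp R)) = 0 := by
  rw [map_sub, map_one, ← coeff_zero_eq_constantCoeff_apply, coeff_rescale, coeff_exp]
  simp

theorem one_sub_exp_neg_pow (m : ℕ) :
    (1 - rescale (-1) (exp R)) ^ m =
      ∑ j ∈ range (m + 1), C ((m.choose j : R) * (-1) ^ j) * rescale (-j : R) (exp R) := by
  rw [sub_eq_neg_add, add_pow]
  refine sum_congr rfl fun j _ => ?_
  rw [one_pow, mul_one, neg_pow, ← map_pow, exp_pow_eq_rescale_exp, rescale_rescale,
    map_mul, map_pow, map_neg, map_one, map_natCast, mul_neg_one]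
  ring

end Coefficients

theorem factorial_mul_coeff_egf (f : ℕ → ℝ) (n : ℕ) :
    (n.factorial : ℝ) * coeff n (egf f) = f n := by
  rw [egf, coeff_mk, mul_div_cancel₀ _ (Nat.cast_ne_zero.mpr n.factorial_ne_zero)]

theorem egf_sum_const_mul {ι : Type*} (s : Finset ι) (c : ι → ℝ) (f : ι → ℕ → ℝ) :
    egf (fun n => ∑ i ∈ s, c i * f i n) = ∑ i ∈ s, C (c i) * egf (f i) := by
  ext n
  simp only [egf, coeff_mk, map_sum, coeff_C_mul, sum_div, mul_div_assoc]

theorem egf_add_eq_rescale_exp_mul {A B : ℝ⟦X⟧} (hA : A ≠ 0) {f : ℝ → ℕ → ℝ}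
    (hf : ∀ x, B * rescale x (exp ℝ) = A * egf (f x)) (x y : ℝ) :
    egf (f (x + y)) = rescale y (exp ℝ) * egf (f x) := by
  refine mul_left_cancel₀ hA ?_
  rw [← hf, mul_left_comm, ← hf, mul_left_comm, exp_mul_exp_eq_exp_add, add_comm]

theorem egf_backwardDiff {f : ℝ → ℕ → ℝ}
    (hf : ∀ x y, egf (f (x + y)) = rescale y (exp ℝ) * egf (f x)) (m : ℕ) (x : ℝ) :
    egf (fun n => backwardDiff m (f · n) x) =
      (1 - rescale (-1) (exp ℝ)) ^ m * egf (f x) := by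
  rw [one_sub_exp_neg_pow, sum_mul]
  unfold backwardDiff
  rw [egf_sum_const_mul]
  refine sum_congr rfl fun j _ => ?_
  rw [sub_eq_add_neg, hf, mul_assoc]

section Polylogarithm

variable (p q : ℝ) (k : ℤ) {S : ℝ⟦X⟧}

theorem coeff_pqLi_eq_coeff_partialSum (hS : constantCoeff S = 0) {i n : ℕ} (hi : i ≤ n) :
    coeff i (pqLi p q k S) =
      coeff i (∑ l ∈ range n, C (1 / pqInt p q (l + 1) ^ k) * S ^ (l + 1)) := by
  have hvanish : ∀ m ∈ Icc 1 n, m ∉ Icc 1 i → coeff i (S ^ m) / pqInt p q m ^ k = 0 :=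
    fun m hm hmi => by
      have him : i < m := by simp only [mem_Icc] at hm hmi; omega
      rw [← mul_one (S ^ m), coeff_pow_mul_eq_zero_of_lt hS 1 him, zero_div]
  rw [pqLi, coeff_mk, sum_subset (Icc_subset_Icc_right hi) hvanish, ← Ico_add_one_right_eq_Icc,
    sum_Ico_eq_sum_range, add_tsub_cancel_right, map_sum]
  refine sum_congr rfl fun l _ => ?_
  rw [coeff_C_mul, add_comm 1 l, one_div_mul_eq_div]

theorem coeff_pqLi_mul (hS : constantCoeff S = 0) (T : ℝ⟦X⟧) (n : ℕ) :
    coeff n (pqLi p q k S * T) =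
      ∑ l ∈ range n, 1 / pqInt p q (l + 1) ^ k * coeff n (S ^ (l + 1) * T) := by
  have htrunc : coeff n (pqLi p q k S * T) =
      coeff n ((∑ l ∈ range n, C (1 / pqInt p q (l + 1) ^ k) * S ^ (l + 1)) * T) := by
    simp only [coeff_mul]
    refine sum_congr rfl fun ij hij => ?_
    rw [coeff_pqLi_eq_coeff_partialSum p q k hS (HasAntidiagonal.antidiagonal.fst_le hij)]
  simp only [htrunc, sum_mul, map_sum, mul_assoc, coeff_C_mul]

end Polylogarithm

theorem pqPolyEuler_eq_sum_classical_euler_general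
    (p q : ℝ) (k : ℤ)
    (E : ℝ → ℕ → ℝ)
    (hE : ∀ x : ℝ,
      2 * pqLi p q k (1 - PowerSeries.rescale (-1) (PowerSeries.exp ℝ)) *
          PowerSeries.rescale x (PowerSeries.exp ℝ) =
        (1 + PowerSeries.exp ℝ) * egf (E x))
    (Eul : ℝ → ℕ → ℝ)
    (hEul : ∀ x : ℝ,
      2 * PowerSeries.rescale x (PowerSeries.exp ℝ) =
        (PowerSeries.exp ℝ + 1) * egf (Eul x)) :
    ∀ (n : ℕ), 1 ≤ n → ∀ x : ℝ,
      (E x n =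
        ∑ l ∈ Finset.range n, (1 / pqInt p q (l + 1) ^ k) *
          ∑ j ∈ Finset.range (l + 2),
            ((l + 1).choose j : ℝ) * (-1) ^ j * Eul (x - j) n) ∧
      (∀ l : ℕ, n ≤ l →
        ∑ j ∈ Finset.range (l + 2),
          ((l + 1).choose j : ℝ) * (-1) ^ j * Eul (x - j) n = 0) := by
  intro n _ x
  set S : ℝ⟦X⟧ := 1 - rescale (-1) (exp ℝ)
  have hS : constantCoeff S = 0 := constantCoeff_one_sub_rescale_exp (-1)
  have hU : exp ℝ + 1 ≠ 0 := fun h => by simpa using congrArg constantCoeff h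
  have hEgfE : egf (E x) = pqLi p q k S * egf (Eul x) := by
    refine mul_left_cancel₀ hU ?_
    rw [add_comm, ← hE x, add_comm, mul_left_comm, ← hEul x, mul_left_comm, mul_assoc]
  have hDiff (m : ℕ) :
      backwardDiff m (Eul · n) x = n.factorial * coeff n (S ^ m * egf (Eul x)) := by
    rw [← egf_backwardDiff (egf_add_eq_rescale_exp_mul hU hEul), factorial_mul_coeff_egf]
  refine ⟨?_, fun l hl => ?_⟩
  · rw [← factorial_mul_coeff_egf (E x), hEgfE, coeff_pqLi_mul p q k hS, mul_sum]
    refine sum_congr rfl fun l _ => ?_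
    rw [mul_left_comm, ← hDiff]
    rfl
  · change backwardDiff (l + 1) (Eul · n) x = 0
    rw [hDiff, coeff_pow_mul_eq_zero_of_lt hS _ (by omega), mul_zero]

theorem pqPolyEuler_eq_sum_classical_euler
    (p q : ℝ) (hq : 0 < q) (hqp : q < p) (hp : p ≤ 1) (k : ℤ)
    (E : ℝ → ℕ → ℝ)
    (hE : ∀ x : ℝ,
      2 * pqLi p q k (1 - PowerSeries.rescale (-1) (PowerSeries.exp ℝ)) *
          PowerSeries.rescale x (PowerSeries.exp ℝ) =
        (1 + PowerSeries.exp ℝ) * egf (E x))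
    (Eul : ℝ → ℕ → ℝ)
    (hEul : ∀ x : ℝ,
      2 * PowerSeries.rescale x (PowerSeries.exp ℝ) =
        (PowerSeries.exp ℝ + 1) * egf (Eul x)) :
    ∀ (n : ℕ), 1 ≤ n → ∀ x : ℝ,
      (E x n =
        ∑ l ∈ Finset.range n, (1 / pqInt p q (l + 1) ^ k) *
          ∑ j ∈ Finset.range (l + 2),
            ((l + 1).choose j : ℝ) * (-1) ^ j * Eul (x - j) n) ∧
      (∀ l : ℕ, n ≤ l →
        ∑ j ∈ Finset.range (l + 2),
          ((l + 1).choose j : ℝ) * (-1) ^ j * Eul (x - j) n = 0) :=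
  pqPolyEuler_eq_sum_classical_euler_general p q k E hE Eul hEul
end
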